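/- arXiv:2011.07890 — 3 statements merged into one kernel-verified Lean document; each statement's English description precedes it below -/
import Mathlib

section
/- Fix a real 0<g<1. For r>0 set u=e^{−r}. Then lim_{r→0+} r·log((g·u;u)_∞) = −Li₂(g), where Li₂(t)=∑_{k≥1}t^k/k². -/
open MeasureTheory Filter Topology Set

noncomputable section



/-- An `(M,N)`-based plane partition, with 0-based indices: the entry `part i j`
corresponds to `Λ_{i+1,j+1}`. -/
structure PlanePartition (M N : ℕ∞) where
  part : ℕ → ℕ → ℕ
  antitone_fst : ∀ i j, part (i + 1) j ≤ part i j
  antitone_snd : ∀ i j, part i (j + 1) ≤ part i j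
  supp_fst : ∀ i j : ℕ, M ≤ (i : ℕ∞) → part i j = 0
  supp_snd : ∀ i j : ℕ, N ≤ (j : ℕ∞) → part i j = 0
  finite_supp : {p : ℕ × ℕ | part p.1 p.2 ≠ 0}.Finite

/-- Left volume: sum of the entries strictly to the left of the diagonal. -/
def PlanePartition.leftVol {M N : ℕ∞} (Λ : PlanePartition M N) : ℕ :=
  ∑ᶠ p : ℕ × ℕ, if p.2 < p.1 then Λ.part p.1 p.2 else 0

/-- Central volume (trace): sum of the diagonal entries. -/
def PlanePartition.centralVol {M N : ℕ∞} (Λ : PlanePartition M N) : ℕ :=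
  ∑ᶠ i : ℕ, Λ.part i i

/-- Right volume: sum of the entries strictly to the right of the diagonal. -/
def PlanePartition.rightVol {M N : ℕ∞} (Λ : PlanePartition M N) : ℕ :=
  ∑ᶠ p : ℕ × ℕ, if p.1 < p.2 then Λ.part p.1 p.2 else 0

/-- The Muttalib–Borodin weight `Q^{left vol} (a √(Q Q̃))^{central vol} Q̃^{right vol}`,
where `Q = q^η` and `Q̃ = q^θ`. -/
def mbWeight (q a η θ : ℝ) {M N : ℕ∞} (Λ : PlanePartition M N) : ℝ :=
  (q ^ η) ^ Λ.leftVol * (a * Real.sqrt ((q ^ η) * (q ^ θ))) ^ Λ.centralVol *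
    (q ^ θ) ^ Λ.rightVol

/-- The probability of the event `E` under the Muttalib–Borodin measure on
`(M,N)`-based plane partitions. -/
def mbProb (q a η θ : ℝ) (M N : ℕ∞) (E : Set (PlanePartition M N)) : ℝ :=
  (∑' Λ : E, mbWeight q a η θ Λ.1) / (∑' Λ : PlanePartition M N, mbWeight q a η θ Λ)

/-- The Fredholm series `det(1-K)_{L²(X)}
  = 1 + ∑_{m ≥ 1} ((-1)^m/m!) ∫_{X^m} det[K(x_i,x_j)] dx₁⋯dx_m`. -/
def fredholmDet (K : ℝ → ℝ → ℂ) (X : Set ℝ) : ℂ :=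
  1 + ∑' m : ℕ,
    ((-1 : ℂ) ^ (m + 1) / (m + 1).factorial) *
      ∫ x : Fin (m + 1) → ℝ in {x | ∀ i, x i ∈ X},
        Matrix.det (Matrix.of fun i j => K (x i) (x j))

/-- `F_he(ζ) = Γ(α/(2η) - ζ/η + 1/2) / Γ(α/(2θ) + ζ/θ + 1/2)`. -/
def Fhe (α η θ : ℝ) (ζ : ℂ) : ℂ :=
  Complex.Gamma (α / (2 * η) - ζ / η + 1 / 2) / Complex.Gamma (α / (2 * θ) + ζ / θ + 1 / 2)

/-- The hard-edge kernel `K_he(x,y)`, a double contour integral over the vertical lines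
`δ + iℝ` (in `ζ`) and `-δ + iℝ` (in `ω`), with the (valid) choice `δ = min(η,θ)/4`. -/
def Khe (α η θ : ℝ) (x y : ℝ) : ℂ :=
  (((x * y) ^ (-(1 / 2) : ℝ) : ℝ) : ℂ) * ((2 * Real.pi * Complex.I) ^ 2)⁻¹ *
    ∫ t : ℝ, (∫ s : ℝ,
      (Fhe α η θ (min η θ / 4 + t * Complex.I) / Fhe α η θ (-(min η θ / 4) + s * Complex.I)) *
        (x : ℂ) ^ (min η θ / 4 + t * Complex.I) * (y : ℂ) ^ (-(-(min η θ / 4) + s * Complex.I)) /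
        ((min η θ / 4 + t * Complex.I) - (-(min η θ / 4) + s * Complex.I)) * Complex.I) *
      Complex.I

/-- `K̃_he(x,y) = e^{-x/2-y/2} K_he(e^{-x}, e^{-y})`. -/
def Kthe (α η θ : ℝ) (x y : ℝ) : ℂ :=
  Real.exp (-x / 2 - y / 2) * Khe α η θ (Real.exp (-x)) (Real.exp (-y))




/-- The infinite q-Pochhammer symbol `(x;u)_∞ = ∏_{i ≥ 0} (1 - x u^i)` in `ℂ`. -/
def qPochInf (x u : ℂ) : ℂ := ∏' i : ℕ, (1 - x * u ^ i)

/-- The point `r e^{iφ}` on the circle of radius `r`. -/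
def zCirc (r φ : ℝ) : ℂ := (r : ℂ) * Complex.exp (φ * Complex.I)

/-- `F_d(z) = (√a Q̃^{1/2}/z; Q̃)_∞ / (√a Q^{1/2} z; Q)_∞` with `Q = q^η`, `Q̃ = q^θ`
(the case `M = N = ∞`). -/
def Fd (q a η θ : ℝ) (z : ℂ) : ℂ :=
  qPochInf (((Real.sqrt a * (q ^ θ) ^ ((1 : ℝ) / 2) : ℝ) : ℂ) / z) ((q ^ θ : ℝ) : ℂ) /
    qPochInf (((Real.sqrt a * (q ^ η) ^ ((1 : ℝ) / 2) : ℝ) : ℂ) * z) ((q ^ η : ℝ) : ℂ)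

/-- A (valid) choice of the contour parameter `δ` for the discrete kernel:
`√a Q̃^{1/2} < 1 - δ` and `(1 + δ) √a Q^{1/2} < 1`. -/
def ddelta (q a η θ : ℝ) : ℝ :=
  min ((1 - Real.sqrt a * (q ^ θ) ^ ((1 : ℝ) / 2)) / 2)
    (((Real.sqrt a * (q ^ η) ^ ((1 : ℝ) / 2))⁻¹ - 1) / 2)

/-- The discrete kernel `K_d(k,ℓ)` with `M = N = ∞`, evaluated at the half-integers
`k = κ + 1/2` and `ℓ = l + 1/2`; note that then `z^{-k+1/2} = z^{-κ}` and
`w^{ℓ+1/2} = w^{l+1}` are integer powers. -/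
def Kd (q a η θ : ℝ) (κ l : ℤ) : ℂ :=
  ((2 * Real.pi : ℂ) ^ 2)⁻¹ *
    ∫ φ in Set.Ioc (-Real.pi) Real.pi, ∫ ψ in Set.Ioc (-Real.pi) Real.pi,
      Fd q a η θ (zCirc (1 + ddelta q a η θ) φ) / Fd q a η θ (zCirc (1 - ddelta q a η θ) ψ) *
        zCirc (1 + ddelta q a η θ) φ ^ (-κ) * zCirc (1 - ddelta q a η θ) ψ ^ (l + 1) /
        (zCirc (1 + ddelta q a η θ) φ - zCirc (1 - ddelta q a η θ) ψ)

/-- The Airy kernel, as a double contour integral over the vertical lines `1 + iℝ`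
(in `ζ`) and `-1 + iℝ` (in `ω`). -/
def airyKernel (x y : ℝ) : ℂ :=
  ((2 * Real.pi * Complex.I) ^ 2)⁻¹ *
    ∫ t : ℝ, (∫ s : ℝ,
      Complex.exp ((1 + t * Complex.I) ^ 3 / 3 - x * (1 + t * Complex.I)) *
        Complex.exp (-(-1 + s * Complex.I) ^ 3 / 3 + y * (-1 + s * Complex.I)) /
        ((1 + t * Complex.I) - (-1 + s * Complex.I)) * Complex.I) * Complex.I

/-- The dilogarithm `Li₂(t) = ∑_{k ≥ 1} t^k / k²`. -/
def Li2 (t : ℝ) : ℝ := ∑' k : ℕ, t ^ (k + 1) / ((k : ℝ) + 1) ^ 2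

/-- The saddle point `z_c` associated to `(a, η, θ)` (with `b = √a`). -/
def zc (a η θ : ℝ) : ℝ :=
  (Real.sqrt a * (θ - η) + Real.sqrt (4 * η * θ + a * (θ - η) ^ 2)) / (2 * θ)

/-- `v_c = -η⁻¹ log(1 - b z_c) - θ⁻¹ log(1 - b / z_c)`; this is the constant `c₁`. -/
def vc (a η θ : ℝ) : ℝ :=
  -η⁻¹ * Real.log (1 - Real.sqrt a * zc a η θ) - θ⁻¹ * Real.log (1 - Real.sqrt a / zc a η θ)

/-- The action `S(z) = η⁻¹ Li₂(b z) - θ⁻¹ Li₂(b / z) - v_c log z`. -/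
def Sfun (a η θ : ℝ) (z : ℝ) : ℝ :=
  η⁻¹ * Li2 (Real.sqrt a * z) - θ⁻¹ * Li2 (Real.sqrt a / z) - vc a η θ * Real.log z

/-- The constant `c₂ = ((1/2) ((z d/dz)³ S)(z_c))^{1/3}`. -/
def c2const (a η θ : ℝ) : ℝ :=
  ((1 / 2) * ((fun f : ℝ → ℝ => fun z => z * deriv f z)^[3] (Sfun a η θ)) (zc a η θ)) ^
    ((1 : ℝ) / 3)

/-- The finite q-Pochhammer symbol `(x;u)_n = ∏_{0 ≤ i < n} (1 - x u^i)` in `ℝ`. -/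
def qPoch (x u : ℝ) (n : ℕ) : ℝ := ∏ i ∈ Finset.range n, (1 - x * u ^ i)

/-- The density (unnormalized) of the continuous Muttalib–Borodin ensemble. -/
def mbDensity (α η θ : ℝ) (M N : ℕ) (x : Fin M → ℝ) : ℝ :=
  (∏ i : Fin M, ∏ j : Fin M,
      if i < j then (x j ^ η - x i ^ η) * (x j ^ θ - x i ^ θ) else 1) *
    ∏ i : Fin M, x i ^ (α + (η + θ) / 2 - 1) * (1 - x i ^ θ) ^ (N - M)

/-- The probability of the event `E` under the continuous Muttalib–Borodin ensemble with
parameters `(α, η, θ, M, N)`, defined as a ratio of integrals over ordered tuples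
`0 < x₁ < ⋯ < x_M < 1`. -/
def contMBProb (α η θ : ℝ) (M N : ℕ) (E : Set (Fin M → ℝ)) : ℝ :=
  (∫ x in {x : Fin M → ℝ | (∀ i, 0 < x i ∧ x i < 1) ∧ StrictMono x ∧ x ∈ E},
      mbDensity α η θ M N x) /
    ∫ x in {x : Fin M → ℝ | (∀ i, 0 < x i ∧ x i < 1) ∧ StrictMono x},
      mbDensity α η θ M N x

/-- A step of a ↘-path: one coordinate increases by exactly 1. -/
def DRStep (p q : ℕ × ℕ) : Prop :=
  (q.1 = p.1 + 1 ∧ q.2 = p.2) ∨ (q.1 = p.1 ∧ q.2 = p.2 + 1)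

/-- A step of a ↗-path: the first coordinate decreases by 1, or the second increases by 1. -/
def URStep (p q : ℕ × ℕ) : Prop :=
  (q.1 + 1 = p.1 ∧ q.2 = p.2) ∨ (q.1 = p.1 ∧ q.2 = p.2 + 1)

/-- Bessel function of the first kind (series form), for `t > 0`. -/
def besselJ (α t : ℝ) : ℝ :=
  ∑' k : ℕ, (-1 : ℝ) ^ k * (t / 2) ^ (2 * (k : ℝ) + α) /
    ((k.factorial : ℝ) * Real.Gamma ((k : ℝ) + α + 1))


/-! Expanding `log (1 - g uⁱ) = -∑ₖ gᵏ uⁱᵏ / k` and summing the geometric series over `i` gives,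
for `u = e^{-r}`, `r log (g u; u)_∞ = -∑ₖ (gᵏ / k²) · kr / (e^{kr} - 1)`. Each factor
`kr / (e^{kr} - 1)` lies in `[0, 1]` and tends to `1` as `r → 0⁺`, so dominated convergence
gives `-∑ₖ gᵏ / k² = -Li₂(g)`. -/

open Real

lemma tendsto_div_exp_sub_one_nhdsNE :
    Tendsto (fun t : ℝ => t / (exp t - 1)) (𝓝[≠] 0) (𝓝 1) := by
  have h := hasDerivAt_iff_tendsto_slope.mp (hasDerivAt_exp 0)
  simpa [slope_fun_def_field, inv_div] using h.inv₀ (exp_ne_zero 0)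

lemma div_exp_sub_one_nonneg {t : ℝ} (ht : 0 ≤ t) : 0 ≤ t / (exp t - 1) :=
  div_nonneg ht (by linarith [add_one_le_exp t])

lemma div_exp_sub_one_le_one {t : ℝ} (ht : 0 ≤ t) : t / (exp t - 1) ≤ 1 :=
  div_le_one_of_le₀ (by linarith [add_one_le_exp t]) (by linarith [add_one_le_exp t])

lemma exp_neg_div_one_sub_exp_neg (t : ℝ) : exp (-t) / (1 - exp (-t)) = (exp t - 1)⁻¹ := by
  rw [exp_neg, ← mul_div_mul_left _ _ (exp_ne_zero t), mul_inv_cancel₀ (exp_ne_zero t),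
    mul_one_sub, mul_inv_cancel₀ (exp_ne_zero t), one_div]

theorem tendsto_tsum_mul_div_exp_sub_one {ι : Type*} {c w : ι → ℝ} (hc : Summable c)
    (hw : ∀ i, 0 < w i) :
    Tendsto (fun r => ∑' i, c i * (w i * r / (exp (w i * r) - 1))) (𝓝[>] 0)
      (𝓝 (∑' i, c i)) := by
  refine tendsto_tsum_of_dominated_convergence hc.abs (fun i => ?_) ?_
  · have hscale : Tendsto (fun r => w i * r) (𝓝[>] 0) (𝓝[≠] 0) := by
      refine tendsto_nhdsWithin_iff.mpr ⟨?_, ?_⟩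
      · simpa using ((continuous_const_mul (w i)).tendsto 0).mono_left nhdsWithin_le_nhds
      · filter_upwards [self_mem_nhdsWithin] with r (hr : 0 < r)
        exact (mul_pos (hw i) hr).ne'
    simpa using (tendsto_div_exp_sub_one_nhdsNE.comp hscale).const_mul (c i)
  · filter_upwards [self_mem_nhdsWithin] with r (hr : 0 < r) i
    have ht := (mul_pos (hw i) hr).le
    rw [norm_mul, norm_of_nonneg (div_exp_sub_one_nonneg ht), norm_eq_abs]
    exact mul_le_of_le_one_right (abs_nonneg _) (div_exp_sub_one_le_one ht)

lemma summable_pow_succ_div_sq {g : ℝ} (hg : |g| ≤ 1) :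
    Summable fun k : ℕ => g ^ (k + 1) / ((k : ℝ) + 1) ^ 2 := by
  have hsq : Summable fun k : ℕ => 1 / ((k : ℝ) + 1) ^ 2 := by
    exact_mod_cast (summable_nat_add_iff 1).mpr (summable_one_div_nat_pow.mpr one_lt_two)
  refine Summable.of_norm_bounded hsq fun k => ?_
  rw [norm_div, norm_pow, norm_eq_abs, norm_of_nonneg (by positivity)]
  exact div_le_div_of_nonneg_right (pow_le_one₀ (abs_nonneg g) hg) (by positivity)

theorem log_tprod_one_sub_mul_pow_succ {g u : ℝ} (hg : |g| ≤ 1) (hu0 : 0 ≤ u) (hu1 : u < 1) :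
    log (∏' i : ℕ, (1 - g * u ^ (i + 1))) =
      -∑' k : ℕ, g ^ (k + 1) / ((k : ℝ) + 1) * (u ^ (k + 1) / (1 - u ^ (k + 1))) := by
  set a : ℕ → ℕ → ℝ := fun i k => g ^ (k + 1) / ((k : ℝ) + 1) * (u ^ (k + 1)) ^ (i + 1)
  have hx : ∀ i : ℕ, |g * u ^ (i + 1)| < 1 := fun i => by
    rw [abs_mul, abs_of_nonneg (pow_nonneg hu0 _)]
    exact (mul_le_of_le_one_left (pow_nonneg hu0 _) hg).trans_lt
      (pow_lt_one₀ hu0 hu1 i.succ_ne_zero)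
  have hrow : ∀ i, HasSum (a i) (-log (1 - g * u ^ (i + 1))) := fun i => by
    convert hasSum_pow_div_log_of_abs_lt_one (hx i) using 2 with k
    simp only [a]
    ring
  have hcol : ∀ k, HasSum (fun i => a i k)
      (g ^ (k + 1) / ((k : ℝ) + 1) * (u ^ (k + 1) / (1 - u ^ (k + 1)))) := fun k => by
    have hgeom := hasSum_geometric_of_lt_one (pow_nonneg hu0 (k + 1))
      (pow_lt_one₀ hu0 hu1 k.succ_ne_zero)
    simpa only [a, pow_succ', div_eq_mul_inv] using (hgeom.mul_left (u ^ (k + 1))).mul_left _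
  have ha : Summable (Function.uncurry a) := by
    refine Summable.of_norm_bounded ((summable_geometric_of_lt_one hu0 hu1).mul_of_nonneg
      (summable_geometric_of_lt_one hu0 hu1) (fun _ => pow_nonneg hu0 _)
      (fun _ => pow_nonneg hu0 _)) fun ⟨i, k⟩ => ?_
    have hcoef : ‖g ^ (k + 1) / ((k : ℝ) + 1)‖ ≤ 1 := by
      rw [norm_div, norm_pow, norm_eq_abs, norm_of_nonneg k.cast_add_one_pos.le]
      exact div_le_one_of_le₀ ((pow_le_one₀ (abs_nonneg g) hg).trans (by simp))
        k.cast_add_one_pos.le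
    calc ‖a i k‖ ≤ u ^ ((k + 1) * (i + 1)) := by
          rw [norm_mul, norm_of_nonneg (pow_nonneg (pow_nonneg hu0 _) _), ← pow_mul]
          exact mul_le_of_le_one_left (by positivity) hcoef
      _ ≤ u ^ i * u ^ k := by
          rw [← pow_add]
          exact pow_le_pow_of_le_one hu0 hu1.le (by nlinarith)
  have hlog : Summable fun i : ℕ => log (1 - g * u ^ (i + 1)) :=
    ha.prod.neg.congr fun i => by
      simp only [Function.uncurry_apply_pair, (hrow i).tsum_eq, neg_neg]
  have hpos : ∀ i : ℕ, 0 < 1 - g * u ^ (i + 1) := fun i => by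
    linarith [le_abs_self (g * u ^ (i + 1)), hx i]
  calc log (∏' i : ℕ, (1 - g * u ^ (i + 1)))
      = ∑' i : ℕ, log (1 - g * u ^ (i + 1)) := by
        rw [← rexp_tsum_eq_tprod hpos hlog, log_exp]
    _ = -∑' k : ℕ, ∑' i : ℕ, a i k := by
        rw [ha.tsum_comm, ← tsum_neg]
        exact tsum_congr fun i => by rw [(hrow i).tsum_eq, neg_neg]
    _ = _ := by simp_rw [(hcol _).tsum_eq]

theorem mul_log_tprod_one_sub_mul_exp_neg_pow {g r : ℝ} (hg : |g| ≤ 1) (hr : 0 < r) :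
    r * log (∏' i : ℕ, (1 - g * exp (-r) ^ (i + 1))) =
      -∑' k : ℕ, g ^ (k + 1) / ((k : ℝ) + 1) ^ 2 *
        (((k : ℝ) + 1) * r / (exp (((k : ℝ) + 1) * r) - 1)) := by
  rw [log_tprod_one_sub_mul_pow_succ hg (exp_pos _).le (exp_lt_one_iff.mpr (neg_neg_of_pos hr)),
    mul_neg, ← tsum_mul_left]
  congr 1
  refine tsum_congr fun k => ?_
  have hpow : exp (-r) ^ (k + 1) = exp (-(((k : ℝ) + 1) * r)) := by
    rw [← exp_nat_mul]
    push_cast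
    ring_nf
  have hk : (k : ℝ) + 1 ≠ 0 := k.cast_add_one_ne_zero
  rw [hpow, exp_neg_div_one_sub_exp_neg]
  field_simp

/-- `lim_{r → 0+} r log (g u; u)_∞ = -Li₂(g)` with `u = e^{-r}`. -/
theorem statement12 (g : ℝ) (hg0 : 0 < g) (hg1 : g < 1) :
    Tendsto (fun r : ℝ => r * Real.log (∏' i : ℕ, (1 - g * Real.exp (-r) ^ (i + 1))))
      (𝓝[>] 0) (𝓝 (-Li2 g)) := by
  have hg : |g| ≤ 1 := abs_le.mpr ⟨by linarith, hg1.le⟩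
  have hlim := (tendsto_tsum_mul_div_exp_sub_one (summable_pow_succ_div_sq hg)
    fun k => k.cast_add_one_pos).neg
  refine hlim.congr' ?_
  filter_upwards [self_mem_nhdsWithin] with r hr
  exact (mul_log_tprod_one_sub_mul_exp_neg_pow hg hr).symm

end
end

section
/- Fix reals 0<a<1 and η,θ>0, and let b=√a, z_c, v_c and S be the associated saddle-point data. Then 0<b·z_c<1 and 0<b/z_c<1, the function S is twice differentiable at z_c, and S′(z_c)=0 and S″(z_c)=0. -/
open MeasureTheory Filter Topology Set

noncomputable section



/-! On `√a < z < 1/√a` the dilogarithm terms differentiate to logarithms, so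
`z S'(z) = -η⁻¹ log(1 - b z) - θ⁻¹ log(1 - b/z) - v_c`, which vanishes at `z_c` by the
choice of `v_c`. Its derivative is `b (η⁻¹/(1 - b z) - θ⁻¹/(z (z - b)))`, which vanishes
exactly when `θ z² - b (θ - η) z - η = 0`, and `z_c` is the positive root of this quadratic.
Since `S'' = ((z S')' z - z S') / z²`, both facts give `S''(z_c) = 0`. The bounds on `b z_c`
and `b / z_c` come from factoring the quadratic against `θ z + b η > 0`. -/

lemma hasDerivAt_Li2_tsum {t : ℝ} (ht : |t| < 1) :
    HasDerivAt Li2 (∑' k : ℕ, t ^ k / ((k : ℝ) + 1)) t := by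
  obtain ⟨r, htr, hr1⟩ := exists_between ht
  have hr0 : 0 < r := (abs_nonneg t).trans_lt htr
  refine hasDerivAt_tsum_of_isPreconnected (u := fun k : ℕ => r ^ k) (y₀ := 0)
    (g := fun k z => z ^ (k + 1) / ((k : ℝ) + 1) ^ 2) (g' := fun k z => z ^ k / ((k : ℝ) + 1))
    (summable_geometric_of_lt_one hr0.le hr1) isOpen_Ioo (convex_Ioo (-r) r).isPreconnected
    (fun k z _ => ?_) (fun k z hz => ?_) ⟨by linarith, hr0⟩ (by simp)
    (abs_lt.mp htr)
  · refine ((hasDerivAt_pow (k + 1) z).div_const (((k : ℝ) + 1) ^ 2)).congr_deriv ?_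
    push_cast
    field_simp
  · calc ‖z ^ k / ((k : ℝ) + 1)‖ = |z| ^ k / ((k : ℝ) + 1) := by
          rw [Real.norm_eq_abs, abs_div, abs_pow, abs_of_pos (a := (k : ℝ) + 1) (by positivity)]
      _ ≤ |z| ^ k := div_le_self (by positivity) (by simp)
      _ ≤ r ^ k := pow_le_pow_left₀ (abs_nonneg z) (abs_le.mpr ⟨hz.1.le, hz.2.le⟩) k

lemma hasDerivAt_Li2 {t : ℝ} (ht : |t| < 1) (ht0 : t ≠ 0) :
    HasDerivAt Li2 (-Real.log (1 - t) / t) t := by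
  have hsum : HasSum (fun k : ℕ => t ^ k / ((k : ℝ) + 1)) (-Real.log (1 - t) / t) :=
    ((Real.hasSum_pow_div_log_of_abs_lt_one ht).div_const t).congr_fun fun k => by
      rw [pow_succ]
      field_simp
  exact hsum.tsum_eq ▸ hasDerivAt_Li2_tsum ht

/-- `(z d/dz) S` at `z`, for `√a < z < 1/√a`. -/
def zDerivSfun (a η θ z : ℝ) : ℝ :=
  -η⁻¹ * Real.log (1 - Real.sqrt a * z) - θ⁻¹ * Real.log (1 - Real.sqrt a / z) - vc a η θ

lemma hasDerivAt_Sfun {a η θ z : ℝ} (ha : 0 < a) (hz : Real.sqrt a < z)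
    (hz' : Real.sqrt a * z < 1) :
    HasDerivAt (Sfun a η θ) (zDerivSfun a η θ z / z) z := by
  have hb : 0 < Real.sqrt a := Real.sqrt_pos.mpr ha
  have hz0 : 0 < z := hb.trans hz
  have hbz : |Real.sqrt a * z| < 1 := by rw [abs_of_pos (by positivity)]; exact hz'
  have hbdz : |Real.sqrt a / z| < 1 := by
    rw [abs_of_pos (by positivity)]; exact (div_lt_one hz0).mpr hz
  have hLi2_mul : HasDerivAt (fun w => Li2 (Real.sqrt a * w))
      (-Real.log (1 - Real.sqrt a * z) / z) z := by
    refine ((hasDerivAt_Li2 hbz (by positivity)).comp z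
      ((hasDerivAt_id z).const_mul (Real.sqrt a))).congr_deriv ?_
    field_simp
  have hLi2_div : HasDerivAt (fun w => Li2 (Real.sqrt a / w))
      (Real.log (1 - Real.sqrt a / z) / z) z := by
    refine ((hasDerivAt_Li2 hbdz (by positivity)).comp z
      ((hasDerivAt_inv hz0.ne').const_mul (Real.sqrt a))).congr_deriv ?_
    field_simp
  refine (((hLi2_mul.const_mul η⁻¹).sub (hLi2_div.const_mul θ⁻¹)).sub
    ((Real.hasDerivAt_log hz0.ne').const_mul (vc a η θ))).congr_deriv ?_
  simp only [zDerivSfun]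
  field_simp

lemma zDerivSfun_zc (a η θ : ℝ) : zDerivSfun a η θ (zc a η θ) = 0 := by
  simp only [zDerivSfun, vc]
  ring

lemma hasDerivAt_zDerivSfun {a η θ z : ℝ} (hz : z ≠ 0) (hbz : Real.sqrt a * z ≠ 1)
    (hzb : z ≠ Real.sqrt a) :
    HasDerivAt (zDerivSfun a η θ)
      (Real.sqrt a * (η⁻¹ / (1 - Real.sqrt a * z) - θ⁻¹ / (z * (z - Real.sqrt a)))) z := by
  have hlog_mul : HasDerivAt (fun w => Real.log (1 - Real.sqrt a * w))
      (-Real.sqrt a / (1 - Real.sqrt a * z)) z := by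
    refine ((((hasDerivAt_id z).const_mul (Real.sqrt a)).const_sub 1).log
      (sub_ne_zero.mpr hbz.symm)).congr_deriv ?_
    simp
  have hlog_div : HasDerivAt (fun w => Real.log (1 - Real.sqrt a / w))
      (Real.sqrt a / (z * (z - Real.sqrt a))) z := by
    have h1 : 1 - Real.sqrt a / z ≠ 0 := by
      rw [sub_ne_zero, ne_comm, Ne, div_eq_one_iff_eq hz]; exact hzb.symm
    refine ((((hasDerivAt_inv hz).const_mul (Real.sqrt a)).const_sub 1).log h1).congr_deriv ?_
    have : z - Real.sqrt a ≠ 0 := sub_ne_zero.mpr hzb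
    field_simp
  refine (((hlog_mul.const_mul (-η⁻¹)).sub (hlog_div.const_mul θ⁻¹)).sub_const
    (vc a η θ)).congr_deriv ?_
  ring

lemma zc_quadratic {a η θ : ℝ} (ha : 0 ≤ a) (hη : 0 < η) (hθ : 0 < θ) :
    θ * zc a η θ ^ 2 - Real.sqrt a * (θ - η) * zc a η θ - η = 0 := by
  have hd : Real.sqrt (4 * η * θ + a * (θ - η) ^ 2) ^ 2 = 4 * η * θ + a * (θ - η) ^ 2 :=
    Real.sq_sqrt (by positivity)
  have hb : Real.sqrt a ^ 2 = a := Real.sq_sqrt ha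
  rw [zc]
  generalize Real.sqrt (4 * η * θ + a * (θ - η) ^ 2) = d at hd
  field_simp
  linear_combination hd - (θ - η) ^ 2 * hb

lemma zc_pos {a η θ : ℝ} (ha : 0 ≤ a) (hη : 0 < η) (hθ : 0 < θ) : 0 < zc a η θ := by
  have hd : Real.sqrt (4 * η * θ + a * (θ - η) ^ 2) ^ 2 = 4 * η * θ + a * (θ - η) ^ 2 :=
    Real.sq_sqrt (by positivity)
  have hb : Real.sqrt a ^ 2 = a := Real.sq_sqrt ha
  have hnum : 0 < Real.sqrt a * (θ - η) + Real.sqrt (4 * η * θ + a * (θ - η) ^ 2) := by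
    nlinarith [Real.sqrt_nonneg a, Real.sqrt_nonneg (4 * η * θ + a * (θ - η) ^ 2)]
  rw [zc]
  positivity

lemma sqrt_lt_zc {a η θ : ℝ} (ha : 0 < a) (ha1 : a < 1) (hη : 0 < η) (hθ : 0 < θ) :
    Real.sqrt a < zc a η θ := by
  have hfactor :
      (zc a η θ - Real.sqrt a) * (θ * zc a η θ + Real.sqrt a * η) = η * (1 - a) := by
    linear_combination zc_quadratic ha.le hη hθ - η * Real.sq_sqrt ha.le
  have hpos : 0 < θ * zc a η θ + Real.sqrt a * η := by
    have := zc_pos ha.le hη hθ; positivity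
  exact sub_pos.mp (pos_of_mul_pos_left (hfactor ▸ mul_pos hη (sub_pos.mpr ha1)) hpos.le)

lemma sqrt_mul_zc_lt_one {a η θ : ℝ} (ha : 0 < a) (ha1 : a < 1) (hη : 0 < η) (hθ : 0 < θ) :
    Real.sqrt a * zc a η θ < 1 := by
  have hz := zc_pos ha.le hη hθ
  have hfactor : (1 - Real.sqrt a * zc a η θ) * (θ * zc a η θ + Real.sqrt a * η)
      = θ * zc a η θ * (1 - a) := by
    linear_combination
      -Real.sqrt a * zc_quadratic ha.le hη hθ - θ * zc a η θ * Real.sq_sqrt ha.le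
  have hpos : 0 < θ * zc a η θ + Real.sqrt a * η := by positivity
  exact sub_pos.mp
    (pos_of_mul_pos_left (hfactor ▸ mul_pos (mul_pos hθ hz) (sub_pos.mpr ha1)) hpos.le)

lemma hasDerivAt_deriv_Sfun_zc {a η θ : ℝ} (ha : 0 < a) (ha1 : a < 1) (hη : 0 < η)
    (hθ : 0 < θ) :
    HasDerivAt (deriv (Sfun a η θ)) 0 (zc a η θ) := by
  have hz := zc_pos ha.le hη hθ
  have hgt := sqrt_lt_zc ha ha1 hη hθ
  have hlt := sqrt_mul_zc_lt_one ha ha1 hη hθ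
  have hderiv : deriv (Sfun a η θ) =ᶠ[𝓝 (zc a η θ)] fun z => zDerivSfun a η θ z / z := by
    have hU : {z | Real.sqrt a < z ∧ Real.sqrt a * z < 1} ∈ 𝓝 (zc a η θ) :=
      ((isOpen_lt continuous_const continuous_id).inter
        (isOpen_lt (continuous_const.mul continuous_id) continuous_const)).mem_nhds ⟨hgt, hlt⟩
    filter_upwards [hU] with z ⟨hz, hz'⟩ using (hasDerivAt_Sfun ha hz hz').deriv
  have hzDeriv : HasDerivAt (zDerivSfun a η θ) 0 (zc a η θ) := by
    refine (hasDerivAt_zDerivSfun hz.ne' hlt.ne hgt.ne').congr_deriv ?_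
    have h1 : 1 - Real.sqrt a * zc a η θ ≠ 0 := sub_ne_zero.mpr hlt.ne'
    have h2 : zc a η θ - Real.sqrt a ≠ 0 := sub_ne_zero.mpr hgt.ne'
    field_simp
    linear_combination Real.sqrt a * zc_quadratic ha.le hη hθ
  refine HasDerivAt.congr_of_eventuallyEq ?_ hderiv
  refine (hzDeriv.div (hasDerivAt_id' _) hz.ne').congr_deriv ?_
  simp [zDerivSfun_zc]

/-- the saddle point data: `0 < b z_c < 1`, `0 < b / z_c < 1`, `S` is twice
differentiable at `z_c` and `S'(z_c) = S''(z_c) = 0`. -/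
theorem statement13 (a η θ : ℝ) (ha0 : 0 < a) (ha1 : a < 1) (hη : 0 < η) (hθ : 0 < θ) :
    0 < Real.sqrt a * zc a η θ ∧ Real.sqrt a * zc a η θ < 1 ∧
    0 < Real.sqrt a / zc a η θ ∧ Real.sqrt a / zc a η θ < 1 ∧
    DifferentiableAt ℝ (Sfun a η θ) (zc a η θ) ∧
    DifferentiableAt ℝ (deriv (Sfun a η θ)) (zc a η θ) ∧
    deriv (Sfun a η θ) (zc a η θ) = 0 ∧
    deriv (deriv (Sfun a η θ)) (zc a η θ) = 0 := by
  have hb : 0 < Real.sqrt a := Real.sqrt_pos.mpr ha0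
  have hz : 0 < zc a η θ := zc_pos ha0.le hη hθ
  have hgt : Real.sqrt a < zc a η θ := sqrt_lt_zc ha0 ha1 hη hθ
  have hlt : Real.sqrt a * zc a η θ < 1 := sqrt_mul_zc_lt_one ha0 ha1 hη hθ
  have hS' := hasDerivAt_Sfun (η := η) (θ := θ) ha0 hgt hlt
  have hS'' := hasDerivAt_deriv_Sfun_zc ha0 ha1 hη hθ
  refine ⟨by positivity, hlt, by positivity, (div_lt_one hz).mpr hgt, hS'.differentiableAt,
    hS''.differentiableAt, ?_, hS''.deriv⟩
  rw [hS'.deriv, zDerivSfun_zc, zero_div]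

end
end

section
/- Fix a real β>0. For ε>0 let X_ε~Geom(e^{−βε}). Then for every x∈(0,1], lim_{ε→0+} P(e^{−ε·X_ε} ≤ x) = x^β; that is, e^{−ε·X_ε} converges in distribution to a Pow(β) random variable as ε→0+. -/
open MeasureTheory Filter Topology Set

noncomputable section



/-! The event `e^{-ε X_ε} ≤ x` is the tail event `⌈-log x / ε⌉ ≤ X_ε`, and a geometric law with
ratio `u` has tails `P(X ≥ n) = u ^ n`, so the probability equals `e^{-β ε ⌈-log x / ε⌉}`
exactly. Since `ε ⌈c / ε⌉ → c` as `ε → 0+`, it tends to `e^{β log x} = x ^ β`. -/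

open Real
open scoped ENNReal

section NatValued

variable {Ω : Type*} [MeasurableSpace Ω] (μ : Measure Ω) [IsProbabilityMeasure μ] (Y : Ω → ℕ)

/- `Y` need not be measurable: the union bounds on `{n ≤ Y}` and on its complement are
complementary, which forces equality. -/
theorem measure_nat_le_eq_tsum {p : ℕ → ℝ≥0∞} (hY : ∀ k, μ {ω | Y ω = k} = p k)
    (hp : ∑' k, p k = 1) (n : ℕ) : μ {ω | n ≤ Y ω} = ∑' k, p (k + n) := by
  have hupper : μ {ω | n ≤ Y ω} ≤ ∑' k, p (k + n) := by
    have hsub : {ω | n ≤ Y ω} ⊆ ⋃ k, {ω | Y ω = k + n} := fun ω hω =>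
      mem_iUnion.2 ⟨Y ω - n, show Y ω = Y ω - n + n from (Nat.sub_add_cancel hω).symm⟩
    simpa only [hY] using (measure_mono (μ := μ) hsub).trans (measure_iUnion_le _)
  have hcompl : μ {ω | n ≤ Y ω}ᶜ ≤ ∑ k ∈ Finset.range n, p k := by
    have hsub : {ω | n ≤ Y ω}ᶜ ⊆ ⋃ k ∈ Finset.range n, {ω | Y ω = k} := fun ω hω =>
      mem_biUnion (Finset.mem_range.2 (not_le.1 hω)) rfl
    simpa only [hY] using (measure_mono (μ := μ) hsub).trans (measure_biUnion_finset_le _ _)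
  have hsplit : ∑ k ∈ Finset.range n, p k + ∑' k, p (k + n) = 1 :=
    ENNReal.summable.sum_add_tsum_nat_add'.trans hp
  have hfinite : ∑ k ∈ Finset.range n, p k ≠ ⊤ :=
    ne_top_of_le_ne_top ENNReal.one_ne_top (hsplit ▸ le_self_add : _ ≤ (1 : ℝ≥0∞))
  refine le_antisymm hupper ((ENNReal.add_le_add_iff_left hfinite).1 ?_)
  calc ∑ k ∈ Finset.range n, p k + ∑' k, p (k + n) = μ univ := by rw [hsplit, measure_univ]
    _ ≤ μ {ω | n ≤ Y ω} + μ {ω | n ≤ Y ω}ᶜ := by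
      rw [← union_compl_self {ω | n ≤ Y ω}]; exact measure_union_le _ _
    _ ≤ ∑ k ∈ Finset.range n, p k + μ {ω | n ≤ Y ω} := by
      rw [add_comm]; exact add_le_add_left hcompl _

theorem hasSum_geometric_tail {u : ℝ} (h0 : 0 ≤ u) (h1 : u < 1) (n : ℕ) :
    HasSum (fun k => (1 - u) * u ^ (k + n)) (u ^ n) := by
  have h := (hasSum_geometric_of_lt_one h0 h1).mul_left ((1 - u) * u ^ n)
  rw [mul_right_comm, mul_inv_cancel₀ (sub_pos.2 h1).ne', one_mul] at h
  have hterm : (fun k => (1 - u) * u ^ (k + n)) = fun k => (1 - u) * u ^ n * u ^ k :=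
    funext fun k => by ring
  exact hterm ▸ h

theorem tsum_ofReal_geometric_tail {u : ℝ} (h0 : 0 ≤ u) (h1 : u < 1) (n : ℕ) :
    ∑' k, ENNReal.ofReal ((1 - u) * u ^ (k + n)) = ENNReal.ofReal (u ^ n) := by
  rw [← ENNReal.ofReal_tsum_of_nonneg (fun k => by have := sub_pos.2 h1; positivity)
    (hasSum_geometric_tail h0 h1 n).summable, (hasSum_geometric_tail h0 h1 n).tsum_eq]

theorem measure_nat_le_eq_pow_of_geometric {u : ℝ} (h0 : 0 ≤ u) (h1 : u < 1)
    (hY : ∀ k, μ {ω | Y ω = k} = ENNReal.ofReal ((1 - u) * u ^ k)) (n : ℕ) :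
    μ {ω | n ≤ Y ω} = ENNReal.ofReal (u ^ n) := by
  rw [measure_nat_le_eq_tsum μ Y hY (by simpa using tsum_ofReal_geometric_tail h0 h1 0) n,
    tsum_ofReal_geometric_tail h0 h1 n]

end NatValued

theorem exp_neg_mul_le_iff_natCeil_le {ε x : ℝ} (hε : 0 < ε) (hx : 0 < x) (k : ℕ) :
    exp (-ε * k) ≤ x ↔ ⌈-log x / ε⌉₊ ≤ k := by
  rw [← le_log_iff_exp_le hx, Nat.ceil_le, div_le_iff₀ hε]
  constructor <;> intro h <;> linarith

theorem tendsto_mul_natCeil_div_nhdsGT_zero {c : ℝ} (hc : 0 ≤ c) :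
    Tendsto (fun ε : ℝ => ε * ⌈c / ε⌉₊) (𝓝[>] 0) (𝓝 c) :=
  ((tendsto_nat_ceil_mul_div_atTop hc).comp tendsto_inv_nhdsGT_zero).congr fun ε => by
    simp only [Function.comp_apply, div_inv_eq_mul, ← div_eq_mul_inv, mul_comm]

/-- if `X_ε ~ Geom(e^{-βε})` then `e^{-ε X_ε}` converges in distribution to
a `Pow(β)` random variable as `ε → 0+`. -/
theorem statement15 (β : ℝ) (hβ : 0 < β)
    {Ω : Type*} [MeasurableSpace Ω] (μ : Measure Ω) [IsProbabilityMeasure μ]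
    (X : ℝ → Ω → ℕ)
    (hdist : ∀ ε : ℝ, 0 < ε → ∀ k : ℕ,
      μ {ω | X ε ω = k} =
        ENNReal.ofReal ((1 - Real.exp (-β * ε)) * Real.exp (-β * ε) ^ k)) :
    ∀ x ∈ Set.Ioc (0 : ℝ) 1,
      Tendsto (fun ε : ℝ => (μ {ω | Real.exp (-ε * (X ε ω : ℝ)) ≤ x}).toReal)
        (𝓝[>] 0) (𝓝 (x ^ β)) := by
  rintro x ⟨hx0, hx1⟩
  have hprob : ∀ ε > 0, (μ {ω | exp (-ε * (X ε ω : ℝ)) ≤ x}).toReal =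
      exp (-β * (ε * ⌈-log x / ε⌉₊)) := fun ε hε => by
    have hu : exp (-β * ε) < 1 := exp_lt_one_iff.2 (by nlinarith)
    simp_rw [exp_neg_mul_le_iff_natCeil_le hε hx0]
    rw [measure_nat_le_eq_pow_of_geometric μ (X ε) (exp_pos _).le hu (hdist ε hε),
      ENNReal.toReal_ofReal (by positivity), ← exp_nat_mul]
    ring_nf
  have hlim : Tendsto (fun ε : ℝ => exp (-β * (ε * ⌈-log x / ε⌉₊))) (𝓝[>] 0) (𝓝 (x ^ β)) := by
    rw [rpow_def_of_pos hx0, show log x * β = -β * -log x by ring]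
    exact (continuous_exp.tendsto _).comp
      ((tendsto_mul_natCeil_div_nhdsGT_zero (neg_nonneg.2 (log_nonpos hx0.le hx1))).const_mul _)
  exact hlim.congr' (eventually_nhdsWithin_of_forall fun ε hε => (hprob ε hε).symm)

end
end
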